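/- For every finite player set N with |N| > 1, there exists an interval game (N,c) that is selection convex but is not a convex interval game; in particular, the game defined by c(S) = [2^{|S|} − 2, 2^{|S|} − 1] for nonempty S ≠ N, c(N) = [2^{|N|} − 2, 2^{|N|} − 2], and c(∅) = [0,0] is selection convex but its length game is not convex. -/
import Mathlib


/-- `v` is a selection of the interval game with lower bounds `wl` and upper bounds `wu`. -/
def IsSelection {n : ℕ} (wl wu v : Finset (Fin n) → ℝ) : Prop :=
  ∀ S : Finset (Fin n), wl S ≤ v S ∧ v S ≤ wu S

/-- A classical cooperative game is convex (supermodular). -/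
def ConvexGame {n : ℕ} (v : Finset (Fin n) → ℝ) : Prop :=
  ∀ S T : Finset (Fin n), v S + v T ≤ v (S ∪ T) + v (S ∩ T)

/-- A convex interval game: both border games and the length game are convex. -/
def ConvexIntervalGame {n : ℕ} (wl wu : Finset (Fin n) → ℝ) : Prop :=
  ConvexGame wl ∧ ConvexGame wu ∧ ConvexGame (fun S => wu S - wl S)

/-- Lower bound of the game `c`: `c(S) = [2^{|S|} − 2, 2^{|S|} − 1]` for nonempty `S ≠ N`,
`c(N) = [2^{|N|} − 2, 2^{|N|} − 2]`, `c(∅) = [0,0]`. -/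
noncomputable def cl8 {n : ℕ} (S : Finset (Fin n)) : ℝ :=
  if S = ∅ then 0 else 2 ^ S.card - 2

/-- Upper bound of the game `c`: `c(S) = [2^{|S|} − 2, 2^{|S|} − 1]` for nonempty `S ≠ N`,
`c(N) = [2^{|N|} − 2, 2^{|N|} − 2]`, `c(∅) = [0,0]`. -/
noncomputable def cu8 {n : ℕ} (S : Finset (Fin n)) : ℝ :=
  if S = ∅ then 0 else if S = Finset.univ then 2 ^ n - 2 else 2 ^ S.card - 1

lemma key_pow {s t u : ℕ} (hs : s < u) (ht : t < u) : (2:ℝ) ^ s + 2 ^ t ≤ 2 ^ u := by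
  obtain ⟨m, rfl⟩ : ∃ m, u = m + 1 := ⟨u - 1, by omega⟩
  have h1 : (2:ℝ) ^ s ≤ 2 ^ m := pow_le_pow_right₀ one_le_two (by omega)
  have h2 : (2:ℝ) ^ t ≤ 2 ^ m := pow_le_pow_right₀ one_le_two (by omega)
  rw [pow_succ]
  linarith

lemma cl8_nonneg {n : ℕ} (S : Finset (Fin n)) : 0 ≤ cl8 S := by
  unfold cl8
  split
  · exact le_refl 0
  · rename_i h
    have hc : 1 ≤ S.card := Finset.card_pos.mpr (Finset.nonempty_iff_ne_empty.mpr h)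
    have : (2:ℝ) ^ 1 ≤ 2 ^ S.card := pow_le_pow_right₀ one_le_two hc
    simp at this
    linarith

/-- For `|N| > 1`, the game `c` is selection convex, its length game is not convex, and
it is not a convex interval game. -/
theorem selection_convex_not_interval_convex {n : ℕ} (hn : 1 < n) :
    (∀ v : Finset (Fin n) → ℝ, IsSelection cl8 cu8 v → ConvexGame v) ∧
    ¬ ConvexGame (fun S : Finset (Fin n) => cu8 S - cl8 S) ∧
    ¬ ConvexIntervalGame (cl8 (n := n)) cu8 := by
  have sel : ∀ v : Finset (Fin n) → ℝ, IsSelection cl8 cu8 v → ConvexGame v := by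
    intro v hv S T
    rcases eq_or_ne S ∅ with rfl | hS
    · simp only [Finset.empty_union, Finset.empty_inter]
      linarith
    rcases eq_or_ne T ∅ with rfl | hT
    · simp only [Finset.union_empty, Finset.inter_empty]
      linarith
    by_cases hST : S ⊆ T
    · rw [Finset.union_eq_right.mpr hST, Finset.inter_eq_left.mpr hST]
      linarith
    by_cases hTS : T ⊆ S
    · rw [Finset.union_eq_left.mpr hTS, Finset.inter_eq_right.mpr hTS]
    · have hSu : S ≠ Finset.univ := fun h => hTS (h ▸ Finset.subset_univ T)
      have hTu : T ≠ Finset.univ := fun h => hST (h ▸ Finset.subset_univ S)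
      have hvS : v S ≤ 2 ^ S.card - 1 := by
        have := (hv S).2
        unfold cu8 at this
        rwa [if_neg hS, if_neg hSu] at this
      have hvT : v T ≤ 2 ^ T.card - 1 := by
        have := (hv T).2
        unfold cu8 at this
        rwa [if_neg hT, if_neg hTu] at this
      have hU : S ∪ T ≠ ∅ := by
        intro h
        exact hS (Finset.union_eq_empty.mp h).1
      have hvU : (2:ℝ) ^ (S ∪ T).card - 2 ≤ v (S ∪ T) := by
        have := (hv (S ∪ T)).1
        unfold cl8 at this
        rwa [if_neg hU] at this
      have hvI : (0:ℝ) ≤ v (S ∩ T) := le_trans (cl8_nonneg _) (hv (S ∩ T)).1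
      have hsu : S.card < (S ∪ T).card :=
        Finset.card_lt_card ⟨Finset.subset_union_left,
          fun h => hTS (Finset.subset_union_right.trans h)⟩
      have htu : T.card < (S ∪ T).card :=
        Finset.card_lt_card ⟨Finset.subset_union_right,
          fun h => hST (Finset.subset_union_left.trans h)⟩
      have := key_pow hsu htu
      linarith
  have len : ¬ ConvexGame (fun S : Finset (Fin n) => cu8 S - cl8 S) := by
    intro h
    set A : Finset (Fin n) := {⟨0, by omega⟩} with hAdef
    have hA0 : A ≠ ∅ := Finset.singleton_ne_empty _
    have hAu : A ≠ Finset.univ := by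
      intro hA
      have := congrArg Finset.card hA
      simp [hAdef, Finset.card_univ] at this
      omega
    have hAc0 : Aᶜ ≠ ∅ := by
      intro hc
      have : Aᶜ.card = 0 := by rw [hc]; simp
      rw [Finset.card_compl] at this
      simp [hAdef, Finset.card_univ] at this
      omega
    have hAcu : Aᶜ ≠ Finset.univ := by
      intro hc
      have : (⟨0, by omega⟩ : Fin n) ∈ Aᶜ := hc ▸ Finset.mem_univ _
      simp [hAdef] at this
    have hkey := h A Aᶜ
    simp only [Finset.union_compl, Finset.inter_compl] at hkey
    have e1 : cu8 A - cl8 A = 1 := by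
      unfold cu8 cl8
      rw [if_neg hA0, if_neg hAu, if_neg hA0]
      ring
    have e2 : cu8 Aᶜ - cl8 Aᶜ = 1 := by
      unfold cu8 cl8
      rw [if_neg hAc0, if_neg hAcu, if_neg hAc0]
      ring
    have hu0 : (Finset.univ : Finset (Fin n)) ≠ ∅ := by
      intro hc
      have : (⟨0, by omega⟩ : Fin n) ∈ (Finset.univ : Finset (Fin n)) := Finset.mem_univ _
      rw [hc] at this
      simp at this
    have e3 : cu8 (Finset.univ : Finset (Fin n)) - cl8 (Finset.univ : Finset (Fin n)) = 0 := by
      unfold cu8 cl8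
      rw [if_neg hu0, if_pos rfl, if_neg hu0]
      simp [Finset.card_univ]
    have e4 : cu8 (∅ : Finset (Fin n)) - cl8 (∅ : Finset (Fin n)) = 0 := by
      unfold cu8 cl8
      simp
    rw [e1, e2, e3, e4] at hkey
    linarith
  exact ⟨sel, len, fun h => len h.2.2⟩
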